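/- Assume β₁ < α and that ∂D satisfies the Aikawa condition with exponent q' for some q' ∈ (β₁, d]. Then there exists C > 0 such that for all x ∈ D and all r > 0, ∫_{D ∖ B(x,r)} J(x,y) dy ≤ C r^{−α} Φ((r ∧ A₀)/(δ_D(x) ∧ A₀)). -/

import Mathlib

open MeasureTheory Metric Set ENNReal Filter

noncomputable def deltaD {d : ℕ} (D : Set (EuclideanSpace ℝ (Fin d)))
    (x : EuclideanSpace ℝ (Fin d)) : ℝ :=
  Metric.infDist x (frontier D)

def Aikawa {d : ℕ} (D : Set (EuclideanSpace ℝ (Fin d))) (q : ℝ) : Prop :=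
  ∃ C₀ : ℝ, 1 ≤ C₀ ∧ ∀ x ∈ frontier D, ∀ r s : ℝ, 0 < s → s ≤ r →
    ENNReal.ofReal r < EMetric.diam (frontier D) →
    MeasureTheory.volume {y : EuclideanSpace ℝ (Fin d) |
        y ∈ Metric.ball x r ∧ Metric.infDist y (frontier D) < s} ≤
      ENNReal.ofReal (C₀ * (s / r) ^ q) * MeasureTheory.volume (Metric.ball x r)

noncomputable def truncMin (A : ℝ≥0∞) (r : ℝ) : ℝ := (min (ENNReal.ofReal r) A).toReal


lemma truncMin_nonneg (A : ℝ≥0∞) (r : ℝ) : 0 ≤ truncMin A r := ENNReal.toReal_nonneg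

lemma truncMin_pos {A : ℝ≥0∞} (hA : 0 < A) {r : ℝ} (hr : 0 < r) : 0 < truncMin A r := by
  apply ENNReal.toReal_pos
  · simp only [ne_eq, min_eq_iff]
    rintro (⟨h, -⟩ | ⟨h, -⟩)
    · exact absurd h (by simp [hr.le, hr])
    · exact absurd h hA.ne'
  · exact ne_top_of_le_ne_top ENNReal.ofReal_ne_top (min_le_left _ _)

lemma truncMin_le (A : ℝ≥0∞) {r : ℝ} (hr : 0 ≤ r) : truncMin A r ≤ r :=
  ENNReal.toReal_le_of_le_ofReal hr (min_le_left _ _)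

lemma truncMin_mono (A : ℝ≥0∞) {r s : ℝ} (h : r ≤ s) : truncMin A r ≤ truncMin A s := by
  apply ENNReal.toReal_mono (ne_top_of_le_ne_top ENNReal.ofReal_ne_top (min_le_left _ _))
  exact min_le_min (ENNReal.ofReal_le_ofReal h) le_rfl

lemma truncMin_div_le {A : ℝ≥0∞} (hA : 0 < A) {r s : ℝ} (hr : 0 < r) (hrs : r ≤ s) :
    truncMin A s / truncMin A r ≤ s / r := by
  have hs : 0 < s := hr.trans_le hrs
  rw [div_le_div_iff₀ (truncMin_pos hA hr) hr]
  rcases le_total A (ENNReal.ofReal r) with hAr | hAr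
  · have hAtop : A ≠ ⊤ := ne_top_of_le_ne_top ENNReal.ofReal_ne_top hAr
    have h1 : truncMin A r = A.toReal := by
      rw [truncMin, min_eq_right hAr]
    have h2 : truncMin A s = A.toReal := by
      rw [truncMin, min_eq_right (hAr.trans (ENNReal.ofReal_le_ofReal hrs))]
    rw [h1, h2]
    nlinarith [ENNReal.toReal_nonneg (a := A)]
  · have h1 : truncMin A r = r := by
      rw [truncMin, min_eq_left hAr, ENNReal.toReal_ofReal hr.le]
    rw [h1]
    rcases le_total (ENNReal.ofReal s) A with hAs | hAs
    · have h2 : truncMin A s = s := by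
        rw [truncMin, min_eq_left hAs, ENNReal.toReal_ofReal hs.le]
      rw [h2]
    · have h2 : truncMin A s = A.toReal := by rw [truncMin, min_eq_right hAs]
      rw [h2]
      have : A.toReal ≤ s := ENNReal.toReal_le_of_le_ofReal hs.le hAs
      exact mul_le_mul_of_nonneg_right this hr.le

lemma truncMin_max_div_le {A : ℝ≥0∞} (hA : 0 < A) {δ s R : ℝ} (hδ : 0 < δ) (hs : 0 ≤ s)
    (hsR : s ≤ R) :
    max (truncMin A s / truncMin A δ) 1 ≤ max (R / δ) 1 := by
  rcases le_total A (ENNReal.ofReal δ) with hAδ | hAδ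
  · have hAtop : A ≠ ⊤ := ne_top_of_le_ne_top ENNReal.ofReal_ne_top hAδ
    have hb : truncMin A δ = A.toReal := by rw [truncMin, min_eq_right hAδ]
    have hbpos : 0 < A.toReal := ENNReal.toReal_pos hA.ne' hAtop
    have hu : truncMin A s ≤ A.toReal := by
      apply ENNReal.toReal_mono hAtop (min_le_right _ _)
    have : truncMin A s / truncMin A δ ≤ 1 := by
      rw [hb, div_le_one hbpos]; exact hu
    calc max (truncMin A s / truncMin A δ) 1 = 1 := max_eq_right this
      _ ≤ max (R / δ) 1 := le_max_right _ _
  · have hb : truncMin A δ = δ := by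
      rw [truncMin, min_eq_left hAδ, ENNReal.toReal_ofReal hδ.le]
    rw [hb]
    apply max_le_max _ le_rfl
    gcongr
    exact (truncMin_le A hs).trans hsR
-- fix: the max_le_max branch directly
lemma nontrivial_euc {d : ℕ} (hd : 1 ≤ d) : Nontrivial (EuclideanSpace ℝ (Fin d)) := by
  apply Module.nontrivial_of_finrank_pos (R := ℝ)
  rw [finrank_euclideanSpace_fin]
  exact hd

lemma volume_ball_rpow {d : ℕ} (hd : 1 ≤ d) (x : EuclideanSpace ℝ (Fin d)) {R : ℝ}
    (hR : 0 ≤ R) :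
    volume (Metric.ball x R) =
      ENNReal.ofReal (R ^ (d : ℝ)) * volume (Metric.ball (0 : EuclideanSpace ℝ (Fin d)) 1) := by
  haveI := nontrivial_euc hd
  rw [MeasureTheory.Measure.addHaar_ball volume x hR, finrank_euclideanSpace_fin,
    ← Real.rpow_natCast R d]

lemma delta_pos {d : ℕ} {D : Set (EuclideanSpace ℝ (Fin d))} (hDopen : IsOpen D)
    (hfr : (frontier D).Nonempty) {x : EuclideanSpace ℝ (Fin d)} (hx : x ∈ D) :
    0 < Metric.infDist x (frontier D) := by
  apply (isClosed_frontier.notMem_iff_infDist_pos hfr).mp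
  rw [hDopen.frontier_eq]
  exact fun h => h.2 hx

lemma L1 {d : ℕ} (hd : 1 ≤ d) (D : Set (EuclideanSpace ℝ (Fin d)))
    (hfr : (frontier D).Nonempty) {q' : ℝ} (hq'0 : 0 < q') (hq'd : q' ≤ (d : ℝ))
    (hAik : Aikawa D q') :
    ∃ C₂ : ℝ≥0∞, C₂ ≠ ⊤ ∧ ∀ (x : EuclideanSpace ℝ (Fin d)) (s R : ℝ), 0 < s → s ≤ R →
      volume {y : EuclideanSpace ℝ (Fin d) |
          y ∈ Metric.ball x R ∧ Metric.infDist y (frontier D) < s} ≤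
        C₂ * ENNReal.ofReal (s ^ q') * ENNReal.ofReal (R ^ ((d : ℝ) - q')) := by
  classical
  obtain ⟨C₀, hC₀, hA⟩ := hAik
  set F := frontier D with hF
  set V₁ := volume (Metric.ball (0 : EuclideanSpace ℝ (Fin d)) 1) with hV₁
  have hV₁top : V₁ ≠ ⊤ := measure_ball_lt_top.ne
  set CA : ℝ≥0∞ := ENNReal.ofReal (C₀ * 3 ^ ((d : ℝ) - q')) * V₁ with hCA
  have hdq : 0 ≤ (d : ℝ) - q' := by linarith
  -- Case A bound, valid whenever ofReal (3R) < diam F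
  have caseA : ∀ (x : EuclideanSpace ℝ (Fin d)) (s R : ℝ), 0 < s → s ≤ R →
      ENNReal.ofReal (3 * R) < EMetric.diam F →
      volume {y : EuclideanSpace ℝ (Fin d) | y ∈ Metric.ball x R ∧ Metric.infDist y F < s} ≤
        CA * ENNReal.ofReal (s ^ q') * ENNReal.ofReal (R ^ ((d : ℝ) - q')) := by
    intro x s R hs hsR hdiam
    have hR : 0 < R := hs.trans_le hsR
    rcases Set.eq_empty_or_nonempty
        {y : EuclideanSpace ℝ (Fin d) | y ∈ Metric.ball x R ∧ Metric.infDist y F < s} with he | hne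
    · rw [he]; simp
    · obtain ⟨y₀, hy₀b, hy₀δ⟩ := hne
      obtain ⟨z, hzF, hy₀z⟩ := (Metric.infDist_lt_iff hfr).mp hy₀δ
      have hsub : {y : EuclideanSpace ℝ (Fin d) | y ∈ Metric.ball x R ∧ Metric.infDist y F < s} ⊆
          {y : EuclideanSpace ℝ (Fin d) | y ∈ Metric.ball z (3 * R) ∧ Metric.infDist y F < s} := by
        rintro y ⟨hyb, hyδ⟩
        refine ⟨?_, hyδ⟩
        have h1 : dist y z ≤ dist y x + dist x z := dist_triangle y x z
        have h1' : dist x z ≤ dist x y₀ + dist y₀ z := dist_triangle x y₀ z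
        have h2 : dist y x < R := mem_ball.mp hyb
        have h3 : dist x y₀ < R := by rw [dist_comm]; exact mem_ball.mp hy₀b
        exact mem_ball.mpr (by linarith)
      calc volume {y : EuclideanSpace ℝ (Fin d) | y ∈ Metric.ball x R ∧ Metric.infDist y F < s}
          ≤ volume {y : EuclideanSpace ℝ (Fin d) |
              y ∈ Metric.ball z (3 * R) ∧ Metric.infDist y F < s} := measure_mono hsub
        _ ≤ ENNReal.ofReal (C₀ * (s / (3 * R)) ^ q') * volume (Metric.ball z (3 * R)) :=
            hA z hzF (3 * R) s hs (by linarith) hdiam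
        _ = ENNReal.ofReal (C₀ * (s / (3 * R)) ^ q') *
              (ENNReal.ofReal ((3 * R) ^ (d : ℝ)) * V₁) := by
            rw [volume_ball_rpow hd z (by positivity)]
        _ = ENNReal.ofReal (C₀ * (s / (3 * R)) ^ q' * (3 * R) ^ (d : ℝ)) * V₁ := by
            rw [ENNReal.ofReal_mul (p := C₀ * (s / (3 * R)) ^ q') (by positivity), mul_assoc]
        _ = CA * ENNReal.ofReal (s ^ q') * ENNReal.ofReal (R ^ ((d : ℝ) - q')) := by
            have hre : C₀ * (s / (3 * R)) ^ q' * (3 * R) ^ (d : ℝ)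
                = (C₀ * 3 ^ ((d : ℝ) - q')) * (s ^ q' * R ^ ((d : ℝ) - q')) := by
              rw [Real.div_rpow hs.le (by positivity),
                show (d : ℝ) = q' + ((d : ℝ) - q') by ring,
                Real.rpow_add (by positivity), Real.mul_rpow (by norm_num) hR.le,
                Real.mul_rpow (by norm_num) hR.le]
              have h3q : (3 : ℝ) ^ q' * R ^ q' ≠ 0 := by positivity
              field_simp
              ring
            rw [hre, ENNReal.ofReal_mul (p := C₀ * 3 ^ ((d : ℝ) - q')) (by positivity),
              ENNReal.ofReal_mul (p := s ^ q') (by positivity), hCA]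
            ring
  rcases eq_or_ne (EMetric.diam F) ⊤ with htop | hne
  · refine ⟨CA, ENNReal.mul_ne_top ENNReal.ofReal_ne_top hV₁top, ?_⟩
    intro x s R hs hsR
    exact caseA x s R hs hsR (htop ▸ ENNReal.ofReal_lt_top)
  have hfr' := hfr
  obtain ⟨z₀, hz₀F⟩ := hfr
  rcases eq_or_ne (EMetric.diam F) 0 with h0 | hpos
  · -- frontier is a singleton
    have hsing : F = {z₀} := (EMetric.diam_eq_zero_iff.mp h0).eq_singleton_of_mem hz₀F
    refine ⟨V₁, hV₁top, ?_⟩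
    intro x s R hs hsR
    have hsub : {y : EuclideanSpace ℝ (Fin d) | y ∈ Metric.ball x R ∧ Metric.infDist y F < s}
        ⊆ Metric.ball z₀ s := by
      rintro y ⟨-, hyδ⟩
      rw [hsing, Metric.infDist_singleton] at hyδ
      exact mem_ball.mpr hyδ
    have hreal : s ^ (d : ℝ) ≤ s ^ q' * R ^ ((d : ℝ) - q') := by
      have hsplit : s ^ (d : ℝ) = s ^ q' * s ^ ((d : ℝ) - q') := by
        rw [← Real.rpow_add hs]; congr 1 <;> ring
      rw [hsplit]
      exact mul_le_mul_of_nonneg_left (Real.rpow_le_rpow hs.le hsR hdq) (by positivity)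
    calc volume {y : EuclideanSpace ℝ (Fin d) | y ∈ Metric.ball x R ∧ Metric.infDist y F < s}
        ≤ volume (Metric.ball z₀ s) := measure_mono hsub
      _ = ENNReal.ofReal (s ^ (d : ℝ)) * V₁ := volume_ball_rpow hd z₀ hs.le
      _ ≤ ENNReal.ofReal (s ^ q' * R ^ ((d : ℝ) - q')) * V₁ :=
          mul_le_mul_left (ENNReal.ofReal_le_ofReal hreal) V₁
      _ = V₁ * ENNReal.ofReal (s ^ q') * ENNReal.ofReal (R ^ ((d : ℝ) - q')) := by
          rw [ENNReal.ofReal_mul (p := s ^ q') (by positivity)]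
          ring
  · -- 0 < diam < ⊤ : covering argument
    set Λ : ℝ := (EMetric.diam F).toReal with hΛdef
    have hΛpos : 0 < Λ := ENNReal.toReal_pos hpos hne
    have hdiam_eq : EMetric.diam F = ENNReal.ofReal Λ := (ENNReal.ofReal_toReal hne).symm
    have hfrb : Bornology.IsBounded F := Metric.isBounded_iff_ediam_ne_top.mpr hne
    have hFclosed : IsClosed F := hF ▸ isClosed_frontier
    have hfc : IsCompact F := Metric.isCompact_of_isClosed_isBounded hFclosed hfrb
    have hcov : F ⊆ ⋃ z ∈ F, Metric.ball z (Λ / 8) :=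
      fun z hz => Set.mem_biUnion hz (mem_ball_self (by positivity))
    obtain ⟨b', hb'sub, hb'fin, hb'cov⟩ :=
      hfc.elim_finite_subcover_image (fun z _ => isOpen_ball) hcov
    set t : Finset (EuclideanSpace ℝ (Fin d)) := hb'fin.toFinset with ht
    have htF : ∀ z ∈ t, z ∈ F := fun z hz => hb'sub (hb'fin.mem_toFinset.mp hz)
    set KB : ℝ := C₀ * (2 / Λ) ^ q' * (Λ / 2) ^ (d : ℝ) * (3 / Λ) ^ ((d : ℝ) - q') with hKB
    set CB : ℝ≥0∞ := (t.card : ℝ≥0∞) * ENNReal.ofReal KB * V₁ with hCB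
    set CC : ℝ≥0∞ := ENNReal.ofReal ((5 : ℝ) ^ (d : ℝ)) * V₁ with hCC
    refine ⟨CA + CB + CC, ?_, ?_⟩
    · exact ENNReal.add_ne_top.mpr ⟨ENNReal.add_ne_top.mpr
        ⟨ENNReal.mul_ne_top ENNReal.ofReal_ne_top hV₁top,
         ENNReal.mul_ne_top (ENNReal.mul_ne_top (ENNReal.natCast_ne_top _)
           ENNReal.ofReal_ne_top) hV₁top⟩,
        ENNReal.mul_ne_top ENNReal.ofReal_ne_top hV₁top⟩
    intro x s R hs hsR
    have hR : 0 < R := hs.trans_le hsR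
    rcases lt_or_ge (ENNReal.ofReal (3 * R)) (EMetric.diam F) with hd1 | hd2
    · exact (caseA x s R hs hsR hd1).trans (by
        gcongr
        exact le_add_right (le_add_right le_rfl))
    · have hΛ3R : Λ ≤ 3 * R := by
        rw [hdiam_eq] at hd2
        exact (ENNReal.ofReal_le_ofReal_iff (by positivity)).mp hd2
      rcases le_or_gt s (Λ / 4) with hs4 | hs4
      · -- small s : use the finite cover
        set g : EuclideanSpace ℝ (Fin d) → Set (EuclideanSpace ℝ (Fin d)) :=
          fun z => {y | y ∈ Metric.ball z (Λ / 2) ∧ Metric.infDist y F < s} with hg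
        have hsub : {y : EuclideanSpace ℝ (Fin d) |
            y ∈ Metric.ball x R ∧ Metric.infDist y F < s} ⊆ ⋃ z ∈ t, g z := by
          rintro y ⟨-, hyδ⟩
          obtain ⟨w, hwF, hyw⟩ := (Metric.infDist_lt_iff hfr').mp hyδ
          obtain ⟨z, hzb', hwz⟩ := Set.mem_iUnion₂.mp (hb'cov hwF)
          refine Set.mem_biUnion (hb'fin.mem_toFinset.mpr hzb') ⟨?_, hyδ⟩
          have h1 : dist y z ≤ dist y w + dist w z := dist_triangle y w z
          have h2 : dist w z < Λ / 8 := mem_ball.mp hwz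
          exact mem_ball.mpr (by linarith)
        have hreal : C₀ * (s / (Λ / 2)) ^ q' * (Λ / 2) ^ (d : ℝ)
            ≤ KB * (s ^ q' * R ^ ((d : ℝ) - q')) := by
          have e1 : (s / (Λ / 2)) ^ q' = (2 / Λ) ^ q' * s ^ q' := by
            rw [show s / (Λ / 2) = (2 / Λ) * s by field_simp,
              Real.mul_rpow (by positivity) hs.le]
          have h1 : (1 : ℝ) ≤ (3 / Λ) ^ ((d : ℝ) - q') * R ^ ((d : ℝ) - q') := by
            rw [← Real.mul_rpow (by positivity) hR.le]
            apply Real.one_le_rpow _ hdq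
            rw [div_mul_eq_mul_div, le_div_iff₀ hΛpos]
            linarith
          have h2 : (0 : ℝ) ≤ C₀ * (2 / Λ) ^ q' * (Λ / 2) ^ (d : ℝ) * s ^ q' := by positivity
          calc C₀ * (s / (Λ / 2)) ^ q' * (Λ / 2) ^ (d : ℝ)
              = C₀ * (2 / Λ) ^ q' * (Λ / 2) ^ (d : ℝ) * s ^ q' := by rw [e1]; ring
            _ ≤ C₀ * (2 / Λ) ^ q' * (Λ / 2) ^ (d : ℝ) * s ^ q' *
                ((3 / Λ) ^ ((d : ℝ) - q') * R ^ ((d : ℝ) - q')) := le_mul_of_one_le_right h2 h1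
            _ = KB * (s ^ q' * R ^ ((d : ℝ) - q')) := by rw [hKB]; ring
        calc volume {y : EuclideanSpace ℝ (Fin d) |
              y ∈ Metric.ball x R ∧ Metric.infDist y F < s}
            ≤ volume (⋃ z ∈ t, g z) := measure_mono hsub
          _ ≤ ∑ z ∈ t, volume (g z) := measure_biUnion_finset_le t g
          _ ≤ t.card • (ENNReal.ofReal (C₀ * (s / (Λ / 2)) ^ q' * (Λ / 2) ^ (d : ℝ)) * V₁) := by
              apply Finset.sum_le_card_nsmul
              intro z hz
              calc volume (g z)
                  ≤ ENNReal.ofReal (C₀ * (s / (Λ / 2)) ^ q') * volume (Metric.ball z (Λ / 2)) :=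
                    hA z (htF z hz) (Λ / 2) s hs (by linarith) (by
                      rw [hdiam_eq]
                      exact (ENNReal.ofReal_lt_ofReal_iff hΛpos).mpr (by linarith))
                _ = ENNReal.ofReal (C₀ * (s / (Λ / 2)) ^ q' * (Λ / 2) ^ (d : ℝ)) * V₁ := by
                    rw [volume_ball_rpow hd z (by positivity),
                      ENNReal.ofReal_mul (p := C₀ * (s / (Λ / 2)) ^ q') (by positivity)]
                    ring
          _ = (t.card : ℝ≥0∞) *
                (ENNReal.ofReal (C₀ * (s / (Λ / 2)) ^ q' * (Λ / 2) ^ (d : ℝ)) * V₁) := by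
              rw [nsmul_eq_mul]
          _ ≤ (t.card : ℝ≥0∞) * (ENNReal.ofReal (KB * (s ^ q' * R ^ ((d : ℝ) - q'))) * V₁) := by
              gcongr
          _ = CB * ENNReal.ofReal (s ^ q') * ENNReal.ofReal (R ^ ((d : ℝ) - q')) := by
              rw [ENNReal.ofReal_mul (p := KB) (by rw [hKB]; positivity),
                ENNReal.ofReal_mul (p := s ^ q') (by positivity), hCB]
              ring
          _ ≤ (CA + CB + CC) * ENNReal.ofReal (s ^ q') * ENNReal.ofReal (R ^ ((d : ℝ) - q')) := by
              gcongr
              exact le_add_right (le_add_left le_rfl)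
      · -- large s
        have hsub : {y : EuclideanSpace ℝ (Fin d) |
            y ∈ Metric.ball x R ∧ Metric.infDist y F < s} ⊆ Metric.ball z₀ (Λ + s) := by
          rintro y ⟨-, hyδ⟩
          obtain ⟨w, hwF, hyw⟩ := (Metric.infDist_lt_iff hfr').mp hyδ
          have h1 : dist y z₀ ≤ dist y w + dist w z₀ := dist_triangle y w z₀
          have h2 : dist w z₀ ≤ Λ := Metric.dist_le_diam_of_mem hfrb hwF hz₀F
          exact mem_ball.mpr (by linarith)
        have hreal : (Λ + s) ^ (d : ℝ) ≤ (5 : ℝ) ^ (d : ℝ) * (s ^ q' * R ^ ((d : ℝ) - q')) := by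
          have h1 : (Λ + s) ^ (d : ℝ) ≤ (5 * s) ^ (d : ℝ) :=
            Real.rpow_le_rpow (by positivity) (by linarith) (by positivity)
          have h2 : (5 * s) ^ (d : ℝ) = 5 ^ (d : ℝ) * s ^ (d : ℝ) :=
            Real.mul_rpow (by norm_num) hs.le
          have h3 : s ^ (d : ℝ) ≤ s ^ q' * R ^ ((d : ℝ) - q') := by
            have hsplit : s ^ (d : ℝ) = s ^ q' * s ^ ((d : ℝ) - q') := by
              rw [← Real.rpow_add hs]; congr 1 <;> ring
            rw [hsplit]
            exact mul_le_mul_of_nonneg_left (Real.rpow_le_rpow hs.le hsR hdq) (by positivity)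
          calc (Λ + s) ^ (d : ℝ) ≤ 5 ^ (d : ℝ) * s ^ (d : ℝ) := by rw [← h2]; exact h1
            _ ≤ 5 ^ (d : ℝ) * (s ^ q' * R ^ ((d : ℝ) - q')) :=
                mul_le_mul_of_nonneg_left h3 (by positivity)
        calc volume {y : EuclideanSpace ℝ (Fin d) |
              y ∈ Metric.ball x R ∧ Metric.infDist y F < s}
            ≤ volume (Metric.ball z₀ (Λ + s)) := measure_mono hsub
          _ = ENNReal.ofReal ((Λ + s) ^ (d : ℝ)) * V₁ := volume_ball_rpow hd z₀ (by positivity)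
          _ ≤ ENNReal.ofReal ((5 : ℝ) ^ (d : ℝ) * (s ^ q' * R ^ ((d : ℝ) - q'))) * V₁ :=
              mul_le_mul_left (ENNReal.ofReal_le_ofReal hreal) V₁
          _ = CC * ENNReal.ofReal (s ^ q') * ENNReal.ofReal (R ^ ((d : ℝ) - q')) := by
              rw [ENNReal.ofReal_mul (p := (5 : ℝ) ^ (d : ℝ)) (by positivity),
                ENNReal.ofReal_mul (p := s ^ q') (by positivity), hCC]
              ring
          _ ≤ (CA + CB + CC) * ENNReal.ofReal (s ^ q') * ENNReal.ofReal (R ^ ((d : ℝ) - q')) := by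
              gcongr
              exact le_add_left le_rfl

lemma rpow_pow_comm (x a : ℝ) (hx : 0 ≤ x) (n : ℕ) : (x ^ n) ^ a = (x ^ a) ^ n := by
  rw [← Real.rpow_natCast x n, ← Real.rpow_mul hx, mul_comm, Real.rpow_mul hx, Real.rpow_natCast]

lemma L2 {d : ℕ} (hd : 1 ≤ d) (D : Set (EuclideanSpace ℝ (Fin d)))
    (hfr : (frontier D).Nonempty) {q' β₁ : ℝ} (hβ₁ : 0 ≤ β₁) (hβq' : β₁ < q')
    (hq'd : q' ≤ (d : ℝ)) (hAik : Aikawa D q') :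
    ∃ C₃ : ℝ≥0∞, C₃ ≠ ⊤ ∧ ∀ (x : EuclideanSpace ℝ (Fin d)) (R : ℝ), 0 < R →
      ∫⁻ y in Metric.ball x R ∩ {y | 0 < Metric.infDist y (frontier D)},
          ENNReal.ofReal (max (R / Metric.infDist y (frontier D)) 1 ^ β₁) ≤
        C₃ * ENNReal.ofReal (R ^ (d : ℝ)) := by
  classical
  obtain ⟨C₂, hC₂top, hL1⟩ := L1 hd D hfr (hβ₁.trans_lt hβq') hq'd hAik
  set V₁ := volume (Metric.ball (0 : EuclideanSpace ℝ (Fin d)) 1) with hV₁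
  have hV₁top : V₁ ≠ ⊤ := measure_ball_lt_top.ne
  have hδcont : Continuous fun y : EuclideanSpace ℝ (Fin d) =>
    Metric.infDist y (frontier D) := Metric.continuous_infDist_pt _
  set w : ℝ≥0∞ := ENNReal.ofReal ((2 : ℝ) ^ (β₁ - q')) with hw
  have hw1 : w < 1 := by
    rw [hw]
    apply ENNReal.ofReal_lt_one.mpr
    exact Real.rpow_lt_one_of_one_lt_of_neg (by norm_num) (by linarith)
  have hS : (1 - w)⁻¹ ≠ ⊤ := ENNReal.inv_ne_top.mpr (tsub_pos_of_lt hw1).ne'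
  refine ⟨V₁ + C₂ * ENNReal.ofReal ((2 : ℝ) ^ β₁) * (1 - w)⁻¹, ?_, ?_⟩
  · exact ENNReal.add_ne_top.mpr ⟨hV₁top,
      ENNReal.mul_ne_top (ENNReal.mul_ne_top hC₂top ENNReal.ofReal_ne_top) hS⟩
  intro x R hR
  set δ : EuclideanSpace ℝ (Fin d) → ℝ := fun y => Metric.infDist y (frontier D) with hδ
  set f : EuclideanSpace ℝ (Fin d) → ℝ≥0∞ :=
    fun y => ENNReal.ofReal (max (R / δ y) 1 ^ β₁) with hf
  set A : Set (EuclideanSpace ℝ (Fin d)) := Metric.ball x R ∩ {y | R ≤ δ y} with hA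
  set sh : ℕ → Set (EuclideanSpace ℝ (Fin d)) := fun j =>
    Metric.ball x R ∩ {y | R ≤ 2 ^ (j + 1) * δ y ∧ 2 ^ j * δ y < R} with hsh
  have hAmeas : MeasurableSet A :=
    measurableSet_ball.inter ((isClosed_le continuous_const hδcont).measurableSet)
  have hshmeas : ∀ j, MeasurableSet (sh j) := fun j =>
    measurableSet_ball.inter
      (((isClosed_le continuous_const (continuous_const.mul hδcont)).measurableSet).inter
        ((isOpen_lt (continuous_const.mul hδcont) continuous_const).measurableSet))
  have hcover : Metric.ball x R ∩ {y | 0 < δ y} ⊆ A ∪ ⋃ j, sh j := by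
    rintro y ⟨hyb, hyδ⟩
    rcases le_or_gt R (δ y) with h | h
    · exact Or.inl ⟨hyb, h⟩
    · refine Or.inr ?_
      have hex : ∃ n : ℕ, R ≤ 2 ^ n * δ y := by
        obtain ⟨n, hn⟩ := pow_unbounded_of_one_lt (R / δ y) (one_lt_two (α := ℝ))
        exact ⟨n, by rw [div_lt_iff₀ hyδ] at hn; linarith⟩
      set n₀ := Nat.find hex with hn₀
      have hP : R ≤ 2 ^ n₀ * δ y := Nat.find_spec hex
      have hn₀pos : 0 < n₀ := by
        rcases Nat.eq_zero_or_pos n₀ with h0 | h0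
        · exfalso
          have := hP
          rw [h0] at this
          simp at this
          linarith
        · exact h0
      refine Set.mem_iUnion.mpr ⟨n₀ - 1, hyb, ?_, ?_⟩
      · rw [Nat.sub_add_cancel hn₀pos]; exact hP
      · have := Nat.find_min hex (Nat.pred_lt hn₀pos.ne')
        push_neg at this
        exact this
  have hbound : ∫⁻ y in Metric.ball x R ∩ {y | 0 < δ y}, f y ≤
      (∫⁻ y in A, f y) + ∑' j, ∫⁻ y in sh j, f y := by
    calc ∫⁻ y in Metric.ball x R ∩ {y | 0 < δ y}, f y
        ≤ ∫⁻ y in A ∪ ⋃ j, sh j, f y := lintegral_mono_set hcover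
      _ ≤ (∫⁻ y in A, f y) + ∫⁻ y in ⋃ j, sh j, f y := lintegral_union_le _ _ _
      _ ≤ (∫⁻ y in A, f y) + ∑' j, ∫⁻ y in sh j, f y := by
          gcongr
          exact lintegral_iUnion_le _ _
  have hAint : ∫⁻ y in A, f y ≤ V₁ * ENNReal.ofReal (R ^ (d : ℝ)) := by
    have h1 : ∫⁻ y in A, f y ≤ ∫⁻ _ in A, (1 : ℝ≥0∞) := by
      apply lintegral_mono_ae
      filter_upwards [ae_restrict_mem hAmeas] with y hy
      rcases hy with ⟨-, hyδ⟩
      have hδpos : 0 < δ y := hR.trans_le hyδ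
      have : max (R / δ y) 1 = 1 := max_eq_right ((div_le_one hδpos).mpr hyδ)
      rw [hf]
      simp only [this, Real.one_rpow]
      exact ENNReal.ofReal_one.le
    calc ∫⁻ y in A, f y ≤ ∫⁻ _ in A, (1 : ℝ≥0∞) := h1
      _ = volume A := by rw [setLIntegral_const, one_mul]
      _ ≤ volume (Metric.ball x R) := measure_mono Set.inter_subset_left
      _ = ENNReal.ofReal (R ^ (d : ℝ)) * V₁ := volume_ball_rpow hd x hR.le
      _ = V₁ * ENNReal.ofReal (R ^ (d : ℝ)) := mul_comm _ _
  have hshint : ∀ j : ℕ, ∫⁻ y in sh j, f y ≤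
      C₂ * ENNReal.ofReal ((2 : ℝ) ^ β₁) * w ^ j * ENNReal.ofReal (R ^ (d : ℝ)) := by
    intro j
    have hstep : ∫⁻ y in sh j, f y ≤
        ENNReal.ofReal (((2 : ℝ) ^ (j + 1)) ^ β₁) * volume (sh j) := by
      calc ∫⁻ y in sh j, f y
          ≤ ∫⁻ _ in sh j, ENNReal.ofReal (((2 : ℝ) ^ (j + 1)) ^ β₁) := by
            apply lintegral_mono_ae
            filter_upwards [ae_restrict_mem (hshmeas j)] with y hy
            rcases hy with ⟨-, hy1, hy2⟩
            have hδpos : 0 < δ y := by nlinarith [pow_pos (two_pos (α := ℝ)) (j + 1)]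
            have hmax : max (R / δ y) 1 ≤ (2 : ℝ) ^ (j + 1) := by
              apply max_le
              · rw [div_le_iff₀ hδpos]; linarith
              · exact one_le_pow₀ (by norm_num)
            exact ENNReal.ofReal_le_ofReal
              (Real.rpow_le_rpow (zero_le_one.trans (le_max_right _ _)) hmax hβ₁)
          _ = ENNReal.ofReal (((2 : ℝ) ^ (j + 1)) ^ β₁) * volume (sh j) :=
            setLIntegral_const _ _
    have hvol : volume (sh j) ≤
        C₂ * ENNReal.ofReal ((R / 2 ^ j) ^ q') * ENNReal.ofReal (R ^ ((d : ℝ) - q')) := by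
      have hsub : sh j ⊆ {y : EuclideanSpace ℝ (Fin d) |
          y ∈ Metric.ball x R ∧ Metric.infDist y (frontier D) < R / 2 ^ j} := by
        rintro y ⟨hyb, -, hy2⟩
        exact ⟨hyb, by rw [lt_div_iff₀ (by positivity)]; linarith⟩
      refine (measure_mono hsub).trans ?_
      exact hL1 x (R / 2 ^ j) R (by positivity) (div_le_self hR.le (one_le_pow₀ (by norm_num)))
    have hkey : ((2 : ℝ) ^ (j + 1)) ^ β₁ * ((R / 2 ^ j) ^ q' * R ^ ((d : ℝ) - q'))
        = (2 : ℝ) ^ β₁ * ((2 : ℝ) ^ (β₁ - q')) ^ j * R ^ (d : ℝ) := by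
      have hw2 : (2 : ℝ) ^ β₁ * (2 : ℝ) ^ (-q') = (2 : ℝ) ^ (β₁ - q') := by
        rw [← Real.rpow_add two_pos]; congr 1 <;> ring
      have hRd : R ^ q' * R ^ ((d : ℝ) - q') = R ^ (d : ℝ) := by
        rw [← Real.rpow_add hR]; congr 1 <;> ring
      rw [rpow_pow_comm 2 β₁ (by norm_num) (j + 1),
        show R / 2 ^ j = R * (2⁻¹ : ℝ) ^ j by rw [div_eq_mul_inv, inv_pow],
        Real.mul_rpow hR.le (by positivity),
        rpow_pow_comm 2⁻¹ q' (by norm_num) j,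
        show (2⁻¹ : ℝ) ^ q' = (2 : ℝ) ^ (-q') by
          rw [Real.inv_rpow (by norm_num), ← Real.rpow_neg (by norm_num)],
        pow_succ, ← hw2, mul_pow, ← hRd]
      ring
    calc ∫⁻ y in sh j, f y
        ≤ ENNReal.ofReal (((2 : ℝ) ^ (j + 1)) ^ β₁) *
            (C₂ * ENNReal.ofReal ((R / 2 ^ j) ^ q') * ENNReal.ofReal (R ^ ((d : ℝ) - q'))) :=
          hstep.trans (mul_le_mul_right hvol _)
      _ = C₂ * ENNReal.ofReal (((2 : ℝ) ^ (j + 1)) ^ β₁ *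
            ((R / 2 ^ j) ^ q' * R ^ ((d : ℝ) - q'))) := by
          rw [ENNReal.ofReal_mul (p := ((2 : ℝ) ^ (j + 1)) ^ β₁) (by positivity),
            ENNReal.ofReal_mul (p := (R / 2 ^ j) ^ q') (by positivity)]
          ring
      _ = C₂ * ENNReal.ofReal ((2 : ℝ) ^ β₁ * ((2 : ℝ) ^ (β₁ - q')) ^ j * R ^ (d : ℝ)) := by
          rw [hkey]
      _ = C₂ * ENNReal.ofReal ((2 : ℝ) ^ β₁) * w ^ j * ENNReal.ofReal (R ^ (d : ℝ)) := by
          rw [ENNReal.ofReal_mul (p := (2 : ℝ) ^ β₁ * ((2 : ℝ) ^ (β₁ - q')) ^ j) (by positivity),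
            ENNReal.ofReal_mul (p := (2 : ℝ) ^ β₁) (by positivity),
            ENNReal.ofReal_pow (by positivity), hw]
          ring
  calc ∫⁻ y in Metric.ball x R ∩ {y | 0 < δ y}, f y
      ≤ (∫⁻ y in A, f y) + ∑' j, ∫⁻ y in sh j, f y := hbound
    _ ≤ V₁ * ENNReal.ofReal (R ^ (d : ℝ)) +
        ∑' j, C₂ * ENNReal.ofReal ((2 : ℝ) ^ β₁) * w ^ j * ENNReal.ofReal (R ^ (d : ℝ)) := by
        exact add_le_add hAint (ENNReal.tsum_le_tsum fun j => hshint j)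
    _ = V₁ * ENNReal.ofReal (R ^ (d : ℝ)) +
        C₂ * ENNReal.ofReal ((2 : ℝ) ^ β₁) * (1 - w)⁻¹ * ENNReal.ofReal (R ^ (d : ℝ)) := by
        congr 1
        calc ∑' j : ℕ, C₂ * ENNReal.ofReal ((2 : ℝ) ^ β₁) * w ^ j * ENNReal.ofReal (R ^ (d : ℝ))
            = ∑' j : ℕ, C₂ * ENNReal.ofReal ((2 : ℝ) ^ β₁) * ENNReal.ofReal (R ^ (d : ℝ)) * w ^ j :=
              tsum_congr fun j => by ring
          _ = C₂ * ENNReal.ofReal ((2 : ℝ) ^ β₁) * ENNReal.ofReal (R ^ (d : ℝ)) * ∑' j : ℕ, w ^ j :=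
              ENNReal.tsum_mul_left
          _ = C₂ * ENNReal.ofReal ((2 : ℝ) ^ β₁) * (1 - w)⁻¹ * ENNReal.ofReal (R ^ (d : ℝ)) := by
              rw [ENNReal.tsum_geometric]; ring
    _ = (V₁ + C₂ * ENNReal.ofReal ((2 : ℝ) ^ β₁) * (1 - w)⁻¹) *
        ENNReal.ofReal (R ^ (d : ℝ)) := by ring

theorem stmt6 {d : ℕ} (hd : 1 ≤ d) (D : Set (EuclideanSpace ℝ (Fin d)))
    (hDopen : IsOpen D) (hDne : D.Nonempty) (hfr : (frontier D).Nonempty)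
    (Φ : ℝ → ℝ) (β₁ C_Φ : ℝ) (hβ₁ : 0 ≤ β₁) (hC_Φ : 1 ≤ C_Φ)
    (hΦ0 : Φ 0 = 1) (hΦ1 : ∀ r : ℝ, 0 ≤ r → 1 ≤ Φ r)
    (hΦmono : MonotoneOn Φ (Set.Ici 0)) (hΦcont : ContinuousOn Φ (Set.Ici 0))
    (hΦscale : ∀ s r : ℝ, 0 < s → s ≤ r → Φ r ≤ C_Φ * (r / s) ^ β₁ * Φ s)
    (α : ℝ) (hα0 : 0 < α) (hα2 : α < 2) (A₀ : ℝ≥0∞) (hA₀ : 0 < A₀)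
    (J : EuclideanSpace ℝ (Fin d) → EuclideanSpace ℝ (Fin d) → ℝ)
    (C₁ : ℝ) (hC₁ : 1 < C₁)
    (hJnn : ∀ x y, 0 ≤ J x y)
    (hJmeas : Measurable (Function.uncurry J))
    (hJsym : ∀ x ∈ D, ∀ y ∈ D, J x y = J y x)
    (hJbound : ∀ x ∈ D, ∀ y ∈ D, x ≠ y →
      C₁⁻¹ * (dist x y ^ (-((d : ℝ) + α)) *
          Φ ((truncMin A₀ (dist x y)) ^ 2 /
            (truncMin A₀ (deltaD D x) * truncMin A₀ (deltaD D y)))) ≤ J x y ∧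
      J x y ≤ C₁ * (dist x y ^ (-((d : ℝ) + α)) *
          Φ ((truncMin A₀ (dist x y)) ^ 2 /
            (truncMin A₀ (deltaD D x) * truncMin A₀ (deltaD D y)))))
    (hβα : β₁ < α) (q' : ℝ) (hβq' : β₁ < q') (hq'd : q' ≤ (d : ℝ))
    (hAik : Aikawa D q') :
    ∃ C : ℝ, 0 < C ∧ ∀ x ∈ D, ∀ r : ℝ, 0 < r →
      (∫⁻ y in D \ Metric.ball x r, ENNReal.ofReal (J x y)) ≤
        ENNReal.ofReal (C * r ^ (-α) *
          Φ (truncMin A₀ r / truncMin A₀ (deltaD D x))) := by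
  classical
  obtain ⟨C₃, hC₃top, hL2⟩ := L2 hd D hfr hβ₁ hβq' hq'd hAik
  have hd1 : (1 : ℝ) ≤ (d : ℝ) := by exact_mod_cast hd
  have hC₁0 : (0 : ℝ) < C₁ := lt_trans one_pos hC₁
  have hCΦ0 : (0 : ℝ) < C_Φ := lt_of_lt_of_le one_pos hC_Φ
  set qe : ℝ≥0∞ := ENNReal.ofReal ((2 : ℝ) ^ (β₁ - α)) with hqe
  have hqe1 : qe < 1 := by
    rw [hqe]
    exact ENNReal.ofReal_lt_one.mpr
      (Real.rpow_lt_one_of_one_lt_of_neg (by norm_num) (by linarith))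
  have hSne : (1 - qe)⁻¹ ≠ ⊤ := ENNReal.inv_ne_top.mpr (tsub_pos_of_lt hqe1).ne'
  set CR : ℝ≥0∞ := ENNReal.ofReal (C₁ * C_Φ * 2 ^ (d : ℝ)) * C₃ * (1 - qe)⁻¹ with hCR
  have hCRtop : CR ≠ ⊤ :=
    ENNReal.mul_ne_top (ENNReal.mul_ne_top ENNReal.ofReal_ne_top hC₃top) hSne
  refine ⟨max CR.toReal 1, lt_of_lt_of_le one_pos (le_max_right _ _), ?_⟩
  intro x hx r hr
  set C : ℝ := max CR.toReal 1 with hC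
  have hC0 : (0 : ℝ) ≤ C := le_trans zero_le_one (le_max_right _ _)
  set δ : EuclideanSpace ℝ (Fin d) → ℝ := fun y => Metric.infDist y (frontier D) with hδdef
  set a : ℝ := truncMin A₀ (deltaD D x) with ha
  have hapos : 0 < a := truncMin_pos hA₀ (delta_pos hDopen hfr hx)
  set wtr : ℝ := truncMin A₀ r with hwtr
  have hwtrpos : 0 < wtr := truncMin_pos hA₀ hr
  have hwa : 0 < wtr / a := div_pos hwtrpos hapos
  have hΦw0 : (0 : ℝ) ≤ Φ (wtr / a) := le_trans zero_le_one (hΦ1 _ hwa.le)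
  set Ann : ℕ → Set (EuclideanSpace ℝ (Fin d)) := fun k =>
    D ∩ (Metric.ball x (2 ^ (k + 1) * r) \ Metric.ball x (2 ^ k * r)) with hAnn
  have hAnnmeas : ∀ k, MeasurableSet (Ann k) := fun k =>
    hDopen.measurableSet.inter (measurableSet_ball.diff measurableSet_ball)
  have hcover : D \ Metric.ball x r ⊆ ⋃ k, Ann k := by
    rintro y ⟨hyD, hyb⟩
    have hge : r ≤ dist y x := not_lt.mp (fun h => hyb (mem_ball.mpr h))
    have hex : ∃ n : ℕ, dist y x < 2 ^ n * r := by
      obtain ⟨n, hn⟩ := pow_unbounded_of_one_lt (dist y x / r) (one_lt_two (α := ℝ))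
      exact ⟨n, by rw [div_lt_iff₀ hr] at hn; linarith⟩
    set n₀ := Nat.find hex with hn₀
    have hP : dist y x < 2 ^ n₀ * r := Nat.find_spec hex
    have hn₀pos : 0 < n₀ := by
      rcases Nat.eq_zero_or_pos n₀ with h0 | h0
      · exfalso
        have := hP
        rw [h0] at this
        simp at this
        linarith
      · exact h0
    refine Set.mem_iUnion.mpr ⟨n₀ - 1, hyD, ?_, ?_⟩
    · rw [Nat.sub_add_cancel hn₀pos]; exact mem_ball.mpr hP
    · intro hmem
      exact Nat.find_min hex (Nat.pred_lt hn₀pos.ne') (mem_ball.mp hmem)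
  -- pointwise bound on each annulus
  have hpt : ∀ k : ℕ, ∀ y ∈ Ann k, ENNReal.ofReal (J x y) ≤
      ENNReal.ofReal (C₁ * C_Φ *
          ((2 ^ k * r) ^ (β₁ - ((d : ℝ) + α)) * r ^ (-β₁) * Φ (wtr / a))) *
        ENNReal.ofReal (max ((2 ^ (k + 1) * r) / δ y) 1 ^ β₁) := by
    intro k y hy
    obtain ⟨hyD, hyb2, hyb1⟩ := hy
    set s : ℝ := dist x y with hs
    have hsge : 2 ^ k * r ≤ s := by
      rw [hs, dist_comm]
      exact not_lt.mp (fun h => hyb1 (mem_ball.mpr h))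
    have hslt : s < 2 ^ (k + 1) * r := by
      rw [hs, dist_comm]; exact mem_ball.mp hyb2
    have hs0 : 0 < s := lt_of_lt_of_le (by positivity) hsge
    have hrs : r ≤ s := le_trans (le_mul_of_one_le_left hr.le (one_le_pow₀ (by norm_num))) hsge
    have hxy : x ≠ y := fun h => by rw [hs, h, dist_self] at hs0; exact lt_irrefl 0 hs0
    obtain ⟨-, hJu⟩ := hJbound x hx y hyD hxy
    set u : ℝ := truncMin A₀ s with hu
    set b : ℝ := truncMin A₀ (deltaD D y) with hb
    have hδy : 0 < deltaD D y := delta_pos hDopen hfr hyD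
    have hbpos : 0 < b := truncMin_pos hA₀ hδy
    have hupos : 0 < u := truncMin_pos hA₀ hs0
    set N : ℝ := max ((2 ^ (k + 1) * r) / δ y) 1 with hN
    have hN1 : 1 ≤ N := le_max_right _ _
    set M : ℝ := max (u / b) 1 * max (u / wtr) 1 with hM
    have hM1 : (1 : ℝ) ≤ M := one_le_mul_of_one_le_of_one_le (le_max_right _ _) (le_max_right _ _)
    have hm2 : max (u / wtr) 1 ≤ s / r :=
      max_le (truncMin_div_le hA₀ hr hrs) ((le_div_iff₀ hr).mpr (by linarith))
    have hm1 : max (u / b) 1 ≤ N := by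
      rw [hN, hδdef]
      exact truncMin_max_div_le hA₀ hδy dist_nonneg hslt.le
    have hArg : u ^ 2 / (a * b) ≤ M * (wtr / a) := by
      have he : u ^ 2 / (a * b) = (u / b) * (u / wtr) * (wtr / a) := by
        field_simp
      rw [he, hM]
      have h1 : (0 : ℝ) ≤ u / b := by positivity
      have h2 : (0 : ℝ) ≤ u / wtr := by positivity
      have h3 : (0 : ℝ) ≤ wtr / a := hwa.le
      gcongr
      · exact le_max_left _ _
      · exact le_max_left _ _
    have hΦArg : Φ (u ^ 2 / (a * b)) ≤ C_Φ * (N ^ β₁ * (s / r) ^ β₁) * Φ (wtr / a) := by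
      have h1 : Φ (u ^ 2 / (a * b)) ≤ Φ (M * (wtr / a)) :=
        hΦmono (Set.mem_Ici.mpr (by positivity)) (Set.mem_Ici.mpr (by positivity)) hArg
      have h2 : Φ (M * (wtr / a)) ≤ C_Φ * M ^ β₁ * Φ (wtr / a) := by
        have := hΦscale (wtr / a) (M * (wtr / a)) hwa (le_mul_of_one_le_left hwa.le hM1)
        rwa [mul_div_assoc, div_self hwa.ne', mul_one] at this
      have hMN : M ^ β₁ ≤ N ^ β₁ * (s / r) ^ β₁ := by
        rw [← Real.mul_rpow (le_trans zero_le_one hN1) (by positivity)]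
        apply Real.rpow_le_rpow (le_trans zero_le_one hM1) _ hβ₁
        rw [hM]
        exact mul_le_mul hm1 hm2 (le_trans zero_le_one (le_max_right _ _))
          (le_trans zero_le_one hN1)
      calc Φ (u ^ 2 / (a * b)) ≤ C_Φ * M ^ β₁ * Φ (wtr / a) := le_trans h1 h2
        _ ≤ C_Φ * (N ^ β₁ * (s / r) ^ β₁) * Φ (wtr / a) :=
            mul_le_mul_of_nonneg_right (mul_le_mul_of_nonneg_left hMN hCΦ0.le) hΦw0
    have hreal : J x y ≤ C₁ * C_Φ *
        ((2 ^ k * r) ^ (β₁ - ((d : ℝ) + α)) * r ^ (-β₁) * Φ (wtr / a)) * N ^ β₁ := by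
      have e1 : s ^ (-((d : ℝ) + α)) * (s / r) ^ β₁
          = s ^ (β₁ - ((d : ℝ) + α)) * r ^ (-β₁) := by
        rw [Real.div_rpow hs0.le hr.le, Real.rpow_neg hr.le β₁,
          show s ^ (β₁ - ((d : ℝ) + α)) = s ^ (-((d : ℝ) + α)) * s ^ β₁ from by
            rw [← Real.rpow_add hs0]; congr 1 <;> ring,
          div_eq_mul_inv]
        ring
      have hbase : s ^ (β₁ - ((d : ℝ) + α)) ≤ (2 ^ k * r) ^ (β₁ - ((d : ℝ) + α)) :=
        Real.rpow_le_rpow_of_nonpos (by positivity) hsge (by linarith)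
      calc J x y ≤ C₁ * (s ^ (-((d : ℝ) + α)) *
            Φ (u ^ 2 / (a * b))) := hJu
        _ ≤ C₁ * (s ^ (-((d : ℝ) + α)) *
            (C_Φ * (N ^ β₁ * (s / r) ^ β₁) * Φ (wtr / a))) := by
            have hsp : (0 : ℝ) ≤ s ^ (-((d : ℝ) + α)) := by positivity
            exact mul_le_mul_of_nonneg_left (mul_le_mul_of_nonneg_left hΦArg hsp) hC₁0.le
        _ = C₁ * C_Φ * ((s ^ (β₁ - ((d : ℝ) + α)) * r ^ (-β₁)) * Φ (wtr / a)) * N ^ β₁ := by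
            linear_combination (C₁ * C_Φ * N ^ β₁ * Φ (wtr / a)) * e1
        _ ≤ C₁ * C_Φ * (((2 ^ k * r) ^ (β₁ - ((d : ℝ) + α)) * r ^ (-β₁)) * Φ (wtr / a)) *
              N ^ β₁ := by
            apply mul_le_mul_of_nonneg_right _ (by positivity)
            apply mul_le_mul_of_nonneg_left _ (by positivity)
            apply mul_le_mul_of_nonneg_right _ hΦw0
            exact mul_le_mul_of_nonneg_right hbase (by positivity)
        _ = C₁ * C_Φ *
            ((2 ^ k * r) ^ (β₁ - ((d : ℝ) + α)) * r ^ (-β₁) * Φ (wtr / a)) * N ^ β₁ := by ring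
    calc ENNReal.ofReal (J x y)
        ≤ ENNReal.ofReal (C₁ * C_Φ *
            ((2 ^ k * r) ^ (β₁ - ((d : ℝ) + α)) * r ^ (-β₁) * Φ (wtr / a)) * N ^ β₁) :=
          ENNReal.ofReal_le_ofReal hreal
      _ = ENNReal.ofReal (C₁ * C_Φ *
            ((2 ^ k * r) ^ (β₁ - ((d : ℝ) + α)) * r ^ (-β₁) * Φ (wtr / a))) *
          ENNReal.ofReal (N ^ β₁) := by
          rw [ENNReal.ofReal_mul (p := C₁ * C_Φ *
            ((2 ^ k * r) ^ (β₁ - ((d : ℝ) + α)) * r ^ (-β₁) * Φ (wtr / a)))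
            (mul_nonneg (by positivity)
              (mul_nonneg (mul_nonneg (by positivity) (by positivity)) hΦw0))]
  -- integral over each annulus
  have hann : ∀ k : ℕ, ∫⁻ y in Ann k, ENNReal.ofReal (J x y) ≤
      (C₃ * ENNReal.ofReal (C₁ * C_Φ * 2 ^ (d : ℝ)) * ENNReal.ofReal (Φ (wtr / a)) *
        ENNReal.ofReal (r ^ (-α))) * (ENNReal.ofReal ((2 : ℝ) ^ (β₁ - α))) ^ k := by
    intro k
    set ck : ℝ := C₁ * C_Φ *
      ((2 ^ k * r) ^ (β₁ - ((d : ℝ) + α)) * r ^ (-β₁) * Φ (wtr / a)) with hckdef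
    have hck0 : 0 ≤ ck :=
      mul_nonneg (by positivity) (mul_nonneg (mul_nonneg (by positivity) (by positivity)) hΦw0)
    have hsub : Ann k ⊆ Metric.ball x (2 ^ (k + 1) * r) ∩ {y | 0 < δ y} := by
      rintro y ⟨hyD, hyb2, -⟩
      exact ⟨hyb2, delta_pos hDopen hfr hyD⟩
    have hkey : ck * (2 ^ (k + 1) * r) ^ (d : ℝ)
        = (C₁ * C_Φ * 2 ^ (d : ℝ)) * (Φ (wtr / a) * (r ^ (-α) * ((2 : ℝ) ^ (β₁ - α)) ^ k)) := by
      have hA2 : ((2 : ℝ) ^ k * r) ^ (β₁ - ((d : ℝ) + α))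
          = ((2 : ℝ) ^ (β₁ - ((d : ℝ) + α))) ^ k * r ^ (β₁ - ((d : ℝ) + α)) := by
        rw [Real.mul_rpow (by positivity) hr.le, rpow_pow_comm 2 _ (by norm_num) k]
      have hB2 : ((2 : ℝ) ^ (k + 1) * r) ^ (d : ℝ)
          = ((2 : ℝ) ^ (d : ℝ)) ^ k * 2 ^ (d : ℝ) * r ^ (d : ℝ) := by
        rw [Real.mul_rpow (by positivity) hr.le, rpow_pow_comm 2 _ (by norm_num) (k + 1),
          pow_succ]
      have h2a : (2 : ℝ) ^ (β₁ - ((d : ℝ) + α)) * (2 : ℝ) ^ (d : ℝ) = 2 ^ (β₁ - α) := by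
        rw [← Real.rpow_add two_pos]; congr 1 <;> ring
      have hra : r ^ (β₁ - ((d : ℝ) + α)) * r ^ (-β₁) * r ^ (d : ℝ) = r ^ (-α) := by
        rw [← Real.rpow_add hr, ← Real.rpow_add hr]; congr 1 <;> ring
      rw [hckdef, hA2, hB2, ← h2a, ← hra, mul_pow]
      ring
    calc ∫⁻ y in Ann k, ENNReal.ofReal (J x y)
        ≤ ∫⁻ y in Ann k, ENNReal.ofReal ck *
            ENNReal.ofReal (max ((2 ^ (k + 1) * r) / δ y) 1 ^ β₁) := by
          apply lintegral_mono_ae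
          filter_upwards [ae_restrict_mem (hAnnmeas k)] with y hy
          exact hpt k y hy
      _ = ENNReal.ofReal ck *
            ∫⁻ y in Ann k, ENNReal.ofReal (max ((2 ^ (k + 1) * r) / δ y) 1 ^ β₁) :=
          lintegral_const_mul' _ _ ENNReal.ofReal_ne_top
      _ ≤ ENNReal.ofReal ck *
            ∫⁻ y in Metric.ball x (2 ^ (k + 1) * r) ∩ {y | 0 < δ y},
              ENNReal.ofReal (max ((2 ^ (k + 1) * r) / δ y) 1 ^ β₁) :=
          mul_le_mul_right (lintegral_mono_set hsub) _
      _ ≤ ENNReal.ofReal ck * (C₃ * ENNReal.ofReal ((2 ^ (k + 1) * r) ^ (d : ℝ))) :=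
          mul_le_mul_right (hL2 x (2 ^ (k + 1) * r) (by positivity)) _
      _ = C₃ * ENNReal.ofReal (ck * (2 ^ (k + 1) * r) ^ (d : ℝ)) := by
          rw [ENNReal.ofReal_mul (p := ck) hck0]
          ring
      _ = (C₃ * ENNReal.ofReal (C₁ * C_Φ * 2 ^ (d : ℝ)) * ENNReal.ofReal (Φ (wtr / a)) *
            ENNReal.ofReal (r ^ (-α))) * (ENNReal.ofReal ((2 : ℝ) ^ (β₁ - α))) ^ k := by
          rw [hkey, ENNReal.ofReal_mul (p := C₁ * C_Φ * 2 ^ (d : ℝ)) (by positivity),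
            ENNReal.ofReal_mul (p := Φ (wtr / a)) hΦw0,
            ENNReal.ofReal_mul (p := r ^ (-α)) (by positivity),
            ENNReal.ofReal_pow (by positivity)]
          ring
  -- sum over annuli
  calc ∫⁻ y in D \ Metric.ball x r, ENNReal.ofReal (J x y)
      ≤ ∫⁻ y in ⋃ k, Ann k, ENNReal.ofReal (J x y) := lintegral_mono_set hcover
    _ ≤ ∑' k, ∫⁻ y in Ann k, ENNReal.ofReal (J x y) := lintegral_iUnion_le _ _
    _ ≤ ∑' k : ℕ, (C₃ * ENNReal.ofReal (C₁ * C_Φ * 2 ^ (d : ℝ)) *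
          ENNReal.ofReal (Φ (wtr / a)) * ENNReal.ofReal (r ^ (-α))) *
          (ENNReal.ofReal ((2 : ℝ) ^ (β₁ - α))) ^ k :=
        ENNReal.tsum_le_tsum fun k => hann k
    _ = (C₃ * ENNReal.ofReal (C₁ * C_Φ * 2 ^ (d : ℝ)) * ENNReal.ofReal (Φ (wtr / a)) *
          ENNReal.ofReal (r ^ (-α))) * (1 - qe)⁻¹ := by
        rw [ENNReal.tsum_mul_left, ENNReal.tsum_geometric, hqe]
    _ = CR * ENNReal.ofReal (r ^ (-α)) * ENNReal.ofReal (Φ (wtr / a)) := by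
        rw [hCR]
        ring
    _ ≤ ENNReal.ofReal C * ENNReal.ofReal (r ^ (-α)) * ENNReal.ofReal (Φ (wtr / a)) := by
        gcongr
        rw [← ENNReal.ofReal_toReal hCRtop]
        exact ENNReal.ofReal_le_ofReal (le_max_left _ _)
    _ = ENNReal.ofReal (C * r ^ (-α) * Φ (wtr / a)) := by
        rw [← ENNReal.ofReal_mul (p := C) hC0,
          ← ENNReal.ofReal_mul (p := C * r ^ (-α)) (mul_nonneg hC0 (by positivity))]
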